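/- arXiv:1206.4258 — 2 statements merged into one kernel-verified Lean document; each statement's English description precedes it below -/
import Mathlib

section
/- Let r = q/p ∈ (0,1) be a rational number in lowest terms and let m = 2n ≥ 3 be an integer (n an integer or half-integer with n > 1). Let D be the subgroup of the group of bijections of ℚ ∪ {∞} generated by ρ and ρ', and C the subgroup generated by c. Then D is isomorphic to the infinite dihedral group, C is infinite cyclic, and Γ_{r,n} is the internal free product of D and C: the homomorphism from the free product D ∗ C to the group of bijections of ℚ ∪ {∞} induced by the inclusions of D and C is injective, with image Γ_{r,n}. -/
/-!
Common setup: 2-bridge link groups, Heckoid groups, the words `u_s`,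
Möbius transformations on `ℚ ∪ {∞}` (modelled as `Option ℚ`, with `none = ∞`),
the group `Γ_{r,n}`, continued fractions, and small–cancellation notions.
-/

/-- The free group `F` on the two generators `a`, `b`. -/
abbrev FG := FreeGroup (Fin 2)

namespace Heckoid

/-- The generator `a`. -/
def ga : FG := FreeGroup.of 0

/-- The generator `b`. -/
def gb : FG := FreeGroup.of 1

/-- `ε_i = (−1)^⌊ i q / p ⌋`, as an element `±1` of `ℤ`. -/
def epsSign (q : ℤ) (p : ℕ) (i : ℕ) : ℤ := (-1) ^ (Int.fdiv ((i : ℤ) * q) (p : ℤ)).natAbs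

/-- The letter at position `i`: `b` if `i` is odd, `a` if `i` is even. -/
def genAt (i : ℕ) : FG := if i % 2 = 1 then gb else ga

/-- `v = b^{ε₁} a^{ε₂} b^{ε₃} ⋯` (`p − 1` alternating letters). -/
def vWord (q : ℤ) (p : ℕ) : FG :=
  ((List.range (p - 1)).map fun i => genAt (i + 1) ^ epsSign q p (i + 1)).prod

/-- The word `u_s` associated with a rational number `s = q/p` in lowest terms:
`u_s = a v b^{(−1)^q} v⁻¹` if `p` is odd, and `u_s = a v a⁻¹ v⁻¹` if `p` is even. -/
def uWord (s : ℚ) : FG :=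
  if s.den % 2 = 1 then
    ga * vWord s.num s.den * gb ^ ((-1 : ℤ) ^ s.num.natAbs) * (vWord s.num s.den)⁻¹
  else
    ga * vWord s.num s.den * ga⁻¹ * (vWord s.num s.den)⁻¹

/-- The even Heckoid group `H(r;n) = ⟨a, b ∣ u_r^n⟩`. -/
abbrev HeckoidGroup (r : ℚ) (n : ℕ) := PresentedGroup ({uWord r ^ n} : Set FG)

/-- The natural projection `F → H(r;n)`. -/
def hMk (r : ℚ) (n : ℕ) : FG →* HeckoidGroup r n := PresentedGroup.mk _

/-- The 2-bridge link group `G(K(s)) = ⟨a, b ∣ u_s⟩`. -/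
abbrev TwoBridgeGroup (s : ℚ) := PresentedGroup ({uWord s} : Set FG)

/-- The natural projection `F → G(K(s))`. -/
def tMk (s : ℚ) : FG →* TwoBridgeGroup s := PresentedGroup.mk _

/-- An epimorphism `G(K(s)) → H(r;n)` is upper-meridian-pair-preserving if it is surjective and
the unordered pair of conjugacy classes of the images of `a`, `b` coincides with the unordered
pair of the conjugacy classes of `a`, `b` in `H(r;n)`. -/
def IsUMPP (s r : ℚ) (n : ℕ) (φ : TwoBridgeGroup s →* HeckoidGroup r n) : Prop :=
  Function.Surjective φ ∧
    ((IsConj (φ (tMk s ga)) (hMk r n ga) ∧ IsConj (φ (tMk s gb)) (hMk r n gb)) ∨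
     (IsConj (φ (tMk s ga)) (hMk r n gb) ∧ IsConj (φ (tMk s gb)) (hMk r n ga)))

/-! ### Möbius transformations of `ℚ ∪ {∞}` -/

/-- The Möbius transformation of the matrix `[[A,B],[C,D]]` as a function on
`ℚ ∪ {∞} = Option ℚ` (`none` is `∞`). -/
def mfun (A B C D : ℚ) : Option ℚ → Option ℚ
  | none => if C = 0 then none else some (A / C)
  | some x => if C * x + D = 0 then none else some ((A * x + B) / (C * x + D))

theorem mfun_leftInv (A B C D : ℚ) (h : A * D - B * C ≠ 0) :
    Function.LeftInverse (mfun D (-B) (-C) A) (mfun A B C D) := by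
  intro x
  cases x with
  | none =>
    by_cases hC : C = 0
    · simp [mfun, hC]
    · have h1 : -C * (A / C) + A = 0 := by field_simp; ring
      simp only [mfun, if_neg hC, if_pos h1]
  | some x =>
    by_cases hx : C * x + D = 0
    · have hC : C ≠ 0 := by
        rintro rfl
        simp only [zero_mul, zero_add] at hx
        rw [hx] at h
        simp at h
      simp only [mfun, if_pos hx]
      have h2 : ¬(-C = 0) := by simpa using hC
      simp only [mfun, if_neg h2]
      congr 1
      field_simp
      linarith
    · have key : -C * ((A * x + B) / (C * x + D)) + A = (A * D - B * C) / (C * x + D) := by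
        field_simp
        ring
      have hne : ¬(-C * ((A * x + B) / (C * x + D)) + A = 0) := by
        rw [key]
        exact div_ne_zero h hx
      simp only [mfun, if_neg hx, if_neg hne]
      congr 1
      have e1 : D * ((A * x + B) / (C * x + D)) + -B = ((A * D - B * C) * x) / (C * x + D) := by
        rw [mul_div_assoc', div_add' _ _ _ hx]
        ring
      rw [e1, key, div_eq_iff (div_ne_zero h hx)]
      field_simp

/-- The Möbius transformation of an invertible matrix `[[A,B],[C,D]]`, as a bijection of
`ℚ ∪ {∞}`. -/
def moebius (A B C D : ℚ) (h : A * D - B * C ≠ 0) : Equiv.Perm (Option ℚ) where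
  toFun := mfun A B C D
  invFun := mfun D (-B) (-C) A
  left_inv := mfun_leftInv A B C D h
  right_inv := fun x => by
    have h' : D * A - -B * -C ≠ 0 := fun hc => h (by linear_combination hc)
    have := mfun_leftInv D (-B) (-C) A h' x
    simpa using this

/-- `ρ(s) = −s`. -/
def rhoPerm : Equiv.Perm (Option ℚ) := moebius (-1) 0 0 1 (by norm_num)

/-- `ρ'(s) = 2 − s`. -/
def rhoPerm' : Equiv.Perm (Option ℚ) := moebius (-1) 2 0 1 (by norm_num)

/-- The parabolic Möbius transformation centered at `r = q/p`, translating by `m` units: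
the Möbius transformation of `[[1+mpq, −mq²],[mp², 1−mpq]]`. -/
def cPerm (r : ℚ) (m : ℤ) : Equiv.Perm (Option ℚ) :=
  moebius (1 + (m : ℚ) * r.den * r.num) (-((m : ℚ) * r.num ^ 2)) ((m : ℚ) * r.den ^ 2)
    (1 - (m : ℚ) * r.den * r.num) (ne_of_eq_of_ne (by ring) one_ne_zero)

/-- The group `Γ_{r,n}` (`m = 2n`): the subgroup of the bijections of `ℚ ∪ {∞}` generated by
`ρ`, `ρ'` and the parabolic `c`. -/
def Gamma (r : ℚ) (m : ℤ) : Subgroup (Equiv.Perm (Option ℚ)) :=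
  Subgroup.closure {rhoPerm, rhoPerm', cPerm r m}

/-- `y` is in the `Γ_{r,n}`-orbit of `x` (where `m = 2n`). -/
def orbitRel (r : ℚ) (m : ℤ) (x y : Option ℚ) : Prop :=
  ∃ g ∈ Gamma r m, g x = y

/-! ### Continued fractions -/

/-- The matrix `[[0,1],[1,b₁]] ⋯ [[0,1],[1,b_l]]` of a continued fraction. -/
def cfMat : List ℤ → Matrix (Fin 2) (Fin 2) ℤ
  | [] => 1
  | b :: L => !![0, 1; 1, b] * cfMat L

/-- The value in `ℚ ∪ {∞}` of the continued fraction
`[b₁, …, b_l] = 1/(b₁ + 1/(b₂ + ⋯ + 1/b_l))`: the image of `0` under the Möbius transformation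
of `cfMat`. -/
def cfValue (L : List ℤ) : Option ℚ :=
  mfun ((cfMat L 0 0 : ℤ) : ℚ) ((cfMat L 0 1 : ℤ) : ℚ) ((cfMat L 1 0 : ℤ) : ℚ)
    ((cfMat L 1 1 : ℤ) : ℚ) (some 0)

/-! ### Small cancellation notions -/

/-- The symmetrized set `R` generated by `u_r^n`: all cyclic permutations of the reduced words
of `u_r^n` and of `u_r^{−n}`. -/
def SymmSet (r : ℚ) (n : ℕ) : Set FG :=
  {w | (∃ k, w.toWord = (uWord r ^ n).toWord.rotate k) ∨
       (∃ k, w.toWord = ((uWord r ^ n)⁻¹).toWord.rotate k)}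

/-- A piece relative to `R`: a nonempty word which is a common initial segment of two distinct
elements of `R`. -/
def IsPiece (r : ℚ) (n : ℕ) (w : FG) : Prop :=
  w ≠ 1 ∧ ∃ x ∈ SymmSet r n, ∃ y ∈ SymmSet r n, x ≠ y ∧
    w.toWord <+: x.toWord ∧ w.toWord <+: y.toWord

/-- `w` is a product of `k` pieces: a concatenation, without cancellation, of `k` pieces. -/
def IsProductOfPieces (r : ℚ) (n : ℕ) (k : ℕ) (w : FG) : Prop :=
  ∃ ws : List FG, ws.length = k ∧ (∀ v ∈ ws, IsPiece r n v) ∧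
    w.toWord = (ws.map FreeGroup.toWord).flatten

/-- The product `x * y` is reduced without cancellation. -/
def NoCancel (x y : FG) : Prop := (x * y).toWord = x.toWord ++ y.toWord

/-- Small cancellation condition `C(p)`: no element of `R` is a product of fewer than `p`
pieces. -/
def SatisfiesC (r : ℚ) (n : ℕ) (p : ℕ) : Prop :=
  ∀ w ∈ SymmSet r n, ∀ k < p, ¬ IsProductOfPieces r n k w

/-- Small cancellation condition `T(4)`. -/
def SatisfiesT4 (r : ℚ) (n : ℕ) : Prop :=
  ∀ r₁ ∈ SymmSet r n, ∀ r₂ ∈ SymmSet r n, ∀ r₃ ∈ SymmSet r n,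
    r₂ ≠ r₁⁻¹ → r₃ ≠ r₂⁻¹ → r₁ ≠ r₃⁻¹ →
    NoCancel r₁ r₂ ∨ NoCancel r₂ r₃ ∨ NoCancel r₃ r₁

/-- `w` is a subword of the cyclic word `(u)`: an initial segment of some cyclic permutation
of the reduced word of `u`. -/
def IsCyclicSubword (w u : FG) : Prop := ∃ k, w.toWord <+: u.toWord.rotate k

end Heckoid

/-!
`D = ⟨ρ, ρ'⟩` acts by the affine maps `s ↦ ±s + 2k`, faithfully, so it is infinite dihedral.
The coordinate change `s ↦ 1/(s - r)` conjugates `c` to the translation by `m p²`, so `c` has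
infinite order. Play ping-pong with the disc `N = {s : |s - r| < 1/p}` and its complement:
a nontrivial element of `D` moves `N` off itself, because `r` lies at distance at least `1/p`
from every integer; a nontrivial power of `c` maps the complement of `N`, which `s ↦ 1/(s - r)`
sends into `[-p, p]`, into `N`, because there it translates by at least `2p² > 2p`.
-/

open Pointwise

namespace Monoid.Coprod

universe u
variable {H K : Type u} [Group H] [Group K]

instance condGroup (b : Bool) : Group (cond b H K) :=
  match b with
  | true => ‹Group H›
  | false => ‹Group K›

def mulEquivCoprodI : H ∗ K ≃* CoprodI (fun b : Bool => cond b H K) :=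
  MonoidHom.toMulEquiv (lift (CoprodI.of (M := fun b : Bool => cond b H K) (i := true))
      (CoprodI.of (M := fun b : Bool => cond b H K) (i := false)))
    (CoprodI.lift fun | true => inl | false => inr)
    (hom_ext rfl rfl)
    (CoprodI.ext_hom _ _ (by rintro (_ | _) <;> rfl))

theorem lift_injective_of_ping_pong {G : Type*} [Group G] (f : H →* G) (g : K →* G)
    (hcard : 3 ≤ Cardinal.mk H ∨ 3 ≤ Cardinal.mk K) {α : Type*} [MulAction G α] {X Y : Set α}
    (hX : X.Nonempty) (hY : Y.Nonempty) (hXY : Disjoint X Y)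
    (hf : ∀ h : H, h ≠ 1 → f h • Y ⊆ X) (hg : ∀ k : K, k ≠ 1 → g k • X ⊆ Y) :
    Function.Injective (lift f g) := by
  have hpp := CoprodI.lift_injective_of_ping_pong (H := fun b : Bool => cond b H K)
    (fun | true => f | false => g)
    (hcard.elim (fun h => Or.inr ⟨true, h⟩) (fun h => Or.inr ⟨false, h⟩))
    (fun b => cond b X Y) (fun | true => hX | false => hY)
    (by rintro (_ | _) (_ | _) h <;> first | exact absurd rfl h | exact hXY | exact hXY.symm)
    (by rintro (_ | _) (_ | _) h <;> first | exact absurd rfl h | exact hf | exact hg)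
  convert hpp.comp mulEquivCoprodI.injective
  rw [← MulEquiv.coe_toMonoidHom, ← MonoidHom.coe_comp]
  exact congrArg DFunLike.coe (hom_ext rfl rfl)

end Monoid.Coprod

open DihedralGroup in
theorem DihedralGroup.closure_sr_zero_sr_one (n : ℕ) :
    Subgroup.closure {sr (0 : ZMod n), sr 1} = ⊤ := by
  set H := Subgroup.closure {sr (0 : ZMod n), sr 1}
  have h0 : sr 0 ∈ H := Subgroup.subset_closure (by simp)
  have h1 : sr 1 ∈ H := Subgroup.subset_closure (by simp)
  have hr : ∀ i, r i ∈ H := fun i => by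
    rw [← ZMod.intCast_zmod_cast i, ← r_one_zpow, ← sub_zero 1, ← sr_mul_sr]
    exact zpow_mem (mul_mem h0 h1) _
  refine eq_top_iff.mpr fun g _ => ?_
  rcases g with i | i
  · exact hr i
  · simpa [r_mul_sr] using mul_mem (hr (-i)) h0

theorem Subgroup.nonempty_closure_singleton_mulEquiv_int {G : Type*} [Group G] {g : G}
    (hg : ¬IsOfFinOrder g) : Nonempty (Subgroup.closure {g} ≃* Multiplicative ℤ) :=
  ⟨(MulEquiv.subgroupCongr (zpowers_eq_closure g).symm).trans
    (MonoidHom.ofInjective (f := zpowersHom G g)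
      (injective_zpow_iff_not_isOfFinOrder.mpr hg)).symm⟩

namespace Heckoid

/-- The point `[u : v]` of the projective line `ℚ ∪ {∞}`. -/
def projPoint (u v : ℚ) : Option ℚ := if v = 0 then none else some (u / v)

theorem exists_projPoint_eq (x : Option ℚ) : ∃ u v : ℚ, (u, v) ≠ 0 ∧ projPoint u v = x := by
  cases x with
  | none => exact ⟨1, 0, by simp, by simp [projPoint]⟩
  | some s => exact ⟨s, 1, by simp, by simp [projPoint]⟩

theorem mfun_projPoint {A B C D u v : ℚ} (huv : (u, v) ≠ 0) :
    mfun A B C D (projPoint u v) = projPoint (A * u + B * v) (C * u + D * v) := by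
  by_cases hv : v = 0
  · subst hv
    have hu : u ≠ 0 := by simpa using huv
    by_cases hC : C = 0
    · simp [projPoint, mfun, hC]
    · simp [projPoint, mfun, hC, hu, mul_div_mul_right]
  · have key : C * (u / v) + D = (C * u + D * v) / v := by field_simp
    by_cases hCD : C * u + D * v = 0
    · simp [projPoint, mfun, hv, key, hCD]
    · rw [projPoint, if_neg hv, projPoint, if_neg hCD]
      simp only [mfun, key, div_eq_zero_iff, hCD, hv, or_self, if_false]
      congr 1
      field_simp

theorem mfun_comp {A B C D A' B' C' D' : ℚ} (h' : A' * D' - B' * C' ≠ 0) (x : Option ℚ) :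
    mfun A B C D (mfun A' B' C' D' x) =
      mfun (A * A' + B * C') (A * B' + B * D') (C * A' + D * C') (C * B' + D * D') x := by
  obtain ⟨u, v, huv, rfl⟩ := exists_projPoint_eq x
  have huv' : (A' * u + B' * v, C' * u + D' * v) ≠ 0 := by
    intro h0
    simp only [Prod.mk_eq_zero] at h0
    have hu : (A' * D' - B' * C') * u = 0 := by linear_combination D' * h0.1 - B' * h0.2
    have hv : (A' * D' - B' * C') * v = 0 := by linear_combination A' * h0.2 - C' * h0.1
    exact huv (by simp [(mul_eq_zero.mp hu).resolve_left h', (mul_eq_zero.mp hv).resolve_left h'])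
  rw [mfun_projPoint huv, mfun_projPoint huv', mfun_projPoint huv]
  congr 1 <;> ring

theorem moebius_mul {A B C D A' B' C' D' : ℚ} (h : A * D - B * C ≠ 0)
    (h' : A' * D' - B' * C' ≠ 0) :
    moebius A B C D h * moebius A' B' C' D' h' =
      moebius (A * A' + B * C') (A * B' + B * D') (C * A' + D * C') (C * B' + D * D')
        (fun h0 => mul_ne_zero h h' (by linear_combination h0)) :=
  Equiv.ext (mfun_comp h')

theorem moebius_congr {A B C D A' B' C' D' : ℚ} {h : A * D - B * C ≠ 0}
    {h' : A' * D' - B' * C' ≠ 0} (hA : A = A') (hB : B = B') (hC : C = C') (hD : D = D') :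
    moebius A B C D h = moebius A' B' C' D' h' := by
  subst hA hB hC hD; rfl

def affinePerm (a : ℚˣ) (b : ℚ) : Equiv.Perm (Option ℚ) := moebius a b 0 1 (by simp)

@[simp]
theorem affinePerm_apply_none (a : ℚˣ) (b : ℚ) : affinePerm a b none = none := rfl

@[simp]
theorem affinePerm_apply_some (a : ℚˣ) (b s : ℚ) :
    affinePerm a b (some s) = some (a * s + b) := by
  simp [affinePerm, moebius, mfun]

theorem affinePerm_mul (a a' : ℚˣ) (b b' : ℚ) :
    affinePerm a b * affinePerm a' b' = affinePerm (a * a') (a * b' + b) := by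
  unfold affinePerm
  rw [moebius_mul]
  exact moebius_congr (by simp) (by ring) (by ring) (by ring)

theorem affinePerm_one_zero : affinePerm 1 0 = 1 := by
  ext x : 1
  cases x <;> simp

def translationHom : Multiplicative ℚ →* Equiv.Perm (Option ℚ) where
  toFun b := affinePerm 1 b.toAdd
  map_one' := affinePerm_one_zero
  map_mul' b b' := by rw [affinePerm_mul]; simp [add_comm]

theorem affinePerm_one_zpow (b : ℚ) (k : ℤ) : affinePerm 1 b ^ k = affinePerm 1 (k * b) := by
  rw [show affinePerm 1 b = translationHom (.ofAdd b) from rfl, ← map_zpow, ← ofAdd_zsmul]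
  simp [translationHom]

-- `ZMod 0` is `ℤ`, but has no coercion to `ℚ`; `ZMod.castHom` provides it.
def dihedralHom : DihedralGroup 0 →* Equiv.Perm (Option ℚ) where
  toFun
    | .r i => affinePerm 1 (-2 * ZMod.castHom dvd_rfl ℚ i)
    | .sr i => affinePerm (-1) (2 * ZMod.castHom dvd_rfl ℚ i)
  map_one' := by
    show affinePerm 1 (-2 * ZMod.castHom dvd_rfl ℚ 0) = 1
    rw [map_zero, mul_zero, affinePerm_one_zero]
  map_mul' := by
    rintro (i | i) (j | j) <;>
      simp only [DihedralGroup.r_mul_r, DihedralGroup.r_mul_sr, DihedralGroup.sr_mul_r,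
        DihedralGroup.sr_mul_sr, affinePerm_mul, map_add, map_sub] <;>
      congr 1 <;> simp <;> ring

theorem dihedralHom_injective : Function.Injective dihedralHom := by
  rw [injective_iff_map_eq_one]
  rintro (i | i) h <;> have h0 := congrArg (· (some 0)) h <;> have h1 := congrArg (· (some 1)) h
  · simp [dihedralHom] at h0
    rw [ZMod.castHom_injective ℚ (h0.trans (map_zero _).symm)]
    rfl
  · simp [dihedralHom] at h0 h1
    linarith

theorem rhoPerm_eq : rhoPerm = dihedralHom (.sr 0) := by
  simp only [rhoPerm, dihedralHom, MonoidHom.coe_mk, OneHom.coe_mk, affinePerm, map_zero]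
  exact moebius_congr (by simp) (by simp) rfl rfl

theorem rhoPerm'_eq : rhoPerm' = dihedralHom (.sr 1) := by
  simp only [rhoPerm', dihedralHom, MonoidHom.coe_mk, OneHom.coe_mk, affinePerm, map_one]
  exact moebius_congr (by simp) (by simp) rfl rfl

theorem closure_rhoPerm_eq_range :
    Subgroup.closure {rhoPerm, rhoPerm'} = dihedralHom.range := by
  rw [rhoPerm_eq, rhoPerm'_eq, ← Set.image_pair, ← MonoidHom.map_closure,
    DihedralGroup.closure_sr_zero_sr_one, MonoidHom.range_eq_map]

def invSubPerm (r : ℚ) : Equiv.Perm (Option ℚ) := moebius 0 1 1 (-r) (by norm_num)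

theorem invSubPerm_apply_none (r : ℚ) : invSubPerm r none = some 0 := by
  simp [invSubPerm, moebius, mfun]

theorem invSubPerm_apply_self (r : ℚ) : invSubPerm r (some r) = none := by
  simp [invSubPerm, moebius, mfun]

theorem invSubPerm_apply_of_ne {r s : ℚ} (h : s ≠ r) :
    invSubPerm r (some s) = some (s - r)⁻¹ := by
  have h' : s + -r ≠ 0 := by rwa [← sub_eq_add_neg, sub_ne_zero]
  simp [invSubPerm, moebius, mfun, h', sub_eq_add_neg]

theorem semiconjBy_invSubPerm_cPerm (r : ℚ) (m : ℤ) :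
    SemiconjBy (invSubPerm r) (cPerm r m) (affinePerm 1 (m * r.den ^ 2)) := by
  have hq : r * r.den = r.num := Rat.mul_den_eq_num r
  unfold SemiconjBy invSubPerm cPerm affinePerm
  rw [moebius_mul, moebius_mul]
  refine moebius_congr ?_ ?_ ?_ ?_ <;> simp only [← hq] <;> push_cast <;> ring

def nearSet (r : ℚ) : Set (Option ℚ) := {x | ∃ s, x = some s ∧ |s - r| < (r.den : ℚ)⁻¹}

@[simp]
theorem none_notMem_nearSet (r : ℚ) : none ∉ nearSet r := by simp [nearSet]

@[simp]
theorem some_mem_nearSet {r s : ℚ} : some s ∈ nearSet r ↔ |s - r| < (r.den : ℚ)⁻¹ := by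
  simp [nearSet]

theorem inv_den_le_abs_intCast_sub {r : ℚ} (hr : r.den ≠ 1) (k : ℤ) :
    (r.den : ℚ)⁻¹ ≤ |k - r| := by
  have hp : (0 : ℚ) < r.den := by positivity
  have hkr : k * r.den - r.num ≠ 0 := by
    intro h
    apply hr
    have : r = k := by
      rw [← Rat.num_div_den r, ← sub_eq_zero.mp h]; push_cast; field_simp
    simp [this]
  have h1 : (1 : ℚ) ≤ |((k - r) * r.den)| := by
    rw [sub_mul, Rat.mul_den_eq_num]
    exact_mod_cast Int.one_le_abs hkr
  rw [abs_mul, abs_of_pos hp] at h1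
  exact (inv_le_iff_one_le_mul₀ hp).mpr h1

theorem dihedralHom_apply_notMem_nearSet {r : ℚ} (hr : r.den ≠ 1) {g : DihedralGroup 0}
    (hg : g ≠ 1) {x : Option ℚ} (hx : x ∈ nearSet r) : dihedralHom g x ∉ nearSet r := by
  obtain ⟨s, rfl, hs⟩ := hx
  have hp : (r.den : ℚ)⁻¹ ≤ 1 := inv_le_one_of_one_le₀ (by exact_mod_cast r.den_pos)
  rcases g with i | i <;> obtain ⟨k, hk⟩ : ∃ k : ℤ, ZMod.castHom dvd_rfl ℚ i = k :=
      ⟨ZMod.cast i, by simp [ZMod.intCast_cast]⟩ <;>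
    simp only [dihedralHom, MonoidHom.coe_mk, OneHom.coe_mk, affinePerm_apply_some, hk,
      some_mem_nearSet, not_lt] <;> push_cast
  -- `s` and its translate `s - 2k` lie `2|k| ≥ 2` apart, farther than the diameter of `N`.
  · have hk1 : (1 : ℚ) ≤ |(k : ℚ)| := by
      have : k ≠ 0 := by
        rintro rfl
        exact hg (congrArg _ (ZMod.castHom_injective ℚ (hk.trans (map_zero _).symm)))
      exact_mod_cast Int.one_le_abs this
    have h := abs_sub (s - r) (1 * s + -2 * k - r)
    rw [show s - r - (1 * s + -2 * k - r) = 2 * k by ring, abs_mul, abs_two] at h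
    linarith
  -- `s` and its reflection `2k - s` have the integer `k` as midpoint.
  · have hk := inv_den_le_abs_intCast_sub hr k
    have h := abs_add_le (-1 * s + 2 * k - r) (s - r)
    rw [show -1 * s + 2 * k - r + (s - r) = 2 * (k - r) by ring, abs_mul, abs_two] at h
    linarith

theorem exists_invSubPerm_apply_of_notMem_nearSet {r : ℚ} {x : Option ℚ}
    (hx : x ∉ nearSet r) : ∃ w, invSubPerm r x = some w ∧ |w| ≤ r.den := by
  rcases x with _ | s
  · exact ⟨0, invSubPerm_apply_none r, by simp⟩
  · rw [some_mem_nearSet, not_lt] at hx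
    have hpos : 0 < |s - r| := (inv_pos.mpr (by exact_mod_cast r.den_pos)).trans_le hx
    refine ⟨_, invSubPerm_apply_of_ne (sub_ne_zero.mp (abs_pos.mp hpos)), ?_⟩
    rw [abs_inv]
    exact inv_le_of_inv_le₀ (by exact_mod_cast r.den_pos) hx

theorem mem_nearSet_of_invSubPerm_apply {r u : ℚ} {y : Option ℚ}
    (hy : invSubPerm r y = some u) (hu : r.den < |u|) : y ∈ nearSet r := by
  rcases y with _ | s
  · rw [invSubPerm_apply_none, Option.some.injEq] at hy
    subst hy
    simp only [abs_zero] at hu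
    exact absurd hu (not_lt.mpr (Nat.cast_nonneg _))
  · by_cases hs : s = r
    · subst hs
      simp [invSubPerm_apply_self] at hy
    · rw [invSubPerm_apply_of_ne hs, Option.some.injEq] at hy
      subst hy
      rw [some_mem_nearSet]
      rw [abs_inv] at hu
      exact (lt_inv_comm₀ (by exact_mod_cast r.den_pos) (abs_pos.mpr (sub_ne_zero.mpr hs))).mp hu

theorem zpow_cPerm_apply_mem_nearSet {r : ℚ} (hr : r.den ≠ 1) {m : ℤ} (hm : 2 ≤ |m|) {k : ℤ}
    (hk : k ≠ 0) {x : Option ℚ} (hx : x ∉ nearSet r) : (cPerm r m ^ k) x ∈ nearSet r := by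
  obtain ⟨w, hw, hwp⟩ := exists_invSubPerm_apply_of_notMem_nearSet hx
  have hT : invSubPerm r ((cPerm r m ^ k) x) = some (w + k * (m * r.den ^ 2)) := by
    rw [← Equiv.Perm.mul_apply, ((semiconjBy_invSubPerm_cPerm r m).zpow_right k).eq,
      affinePerm_one_zpow, Equiv.Perm.mul_apply, hw, affinePerm_apply_some]
    simp
  refine mem_nearSet_of_invSubPerm_apply hT ?_
  have hp : (2 : ℚ) ≤ r.den := by
    have := r.den_pos
    exact_mod_cast (show 2 ≤ r.den by omega)
  have hk1 : (1 : ℚ) ≤ |(k : ℚ)| := by exact_mod_cast Int.one_le_abs hk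
  have hm2 : (2 : ℚ) ≤ |(m : ℚ)| := by exact_mod_cast hm
  have ha : 2 * (r.den : ℚ) ^ 2 ≤ |(k : ℚ) * (m * r.den ^ 2)| := by
    rw [abs_mul, abs_mul, abs_of_nonneg (sq_nonneg (r.den : ℚ))]
    have hp2 : 0 ≤ (r.den : ℚ) ^ 2 := sq_nonneg _
    nlinarith [mul_le_mul hk1 (mul_le_mul_of_nonneg_right hm2 hp2) (by positivity) (abs_nonneg _)]
  have h := abs_sub (w + k * (m * r.den ^ 2)) w
  rw [add_sub_cancel_left] at h
  nlinarith

theorem not_isOfFinOrder_cPerm {r : ℚ} (hr : r.den ≠ 1) {m : ℤ} (hm : 2 ≤ |m|) :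
    ¬IsOfFinOrder (cPerm r m) := by
  rw [isOfFinOrder_iff_zpow_eq_one]
  rintro ⟨k, hk, h⟩
  have := zpow_cPerm_apply_mem_nearSet hr hm hk (none_notMem_nearSet r)
  rw [h] at this
  exact none_notMem_nearSet r this

theorem smul_nearSet_subset_compl {r : ℚ} (hr : r.den ≠ 1) {d : Equiv.Perm (Option ℚ)}
    (hd : d ∈ Subgroup.closure {rhoPerm, rhoPerm'}) (hne : d ≠ 1) :
    d • nearSet r ⊆ (nearSet r)ᶜ := by
  rw [closure_rhoPerm_eq_range] at hd
  obtain ⟨g, rfl⟩ := hd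
  exact Set.smul_set_subset_iff.mpr fun x hx =>
    dihedralHom_apply_notMem_nearSet hr (by rintro rfl; exact hne (map_one _)) hx

theorem smul_compl_nearSet_subset {r : ℚ} (hr : r.den ≠ 1) {m : ℤ} (hm : 2 ≤ |m|)
    {c : Equiv.Perm (Option ℚ)} (hc : c ∈ Subgroup.closure {cPerm r m}) (hne : c ≠ 1) :
    c • (nearSet r)ᶜ ⊆ nearSet r := by
  obtain ⟨k, rfl⟩ := Subgroup.mem_closure_singleton.mp hc
  exact Set.smul_set_subset_iff.mpr fun x hx =>
    zpow_cPerm_apply_mem_nearSet hr hm (by rintro rfl; exact hne (zpow_zero _)) hx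

noncomputable def closureRhoPermMulEquiv :
    Subgroup.closure {rhoPerm, rhoPerm'} ≃* DihedralGroup 0 :=
  (MulEquiv.subgroupCongr closure_rhoPerm_eq_range).trans
    (MonoidHom.ofInjective dihedralHom_injective).symm

/-- `D = ⟨ρ, ρ'⟩` is infinite dihedral, `C = ⟨c⟩` is infinite cyclic, and
`Γ_{r,n}` is the internal free product of `D` and `C`: the homomorphism `D ∗ C → Perm(ℚ ∪ {∞})`
induced by the inclusions is injective with image `Γ_{r,n}`. -/
theorem gamma_free_product (r : ℚ) (hr0 : 0 < r) (hr1 : r < 1) (m : ℤ) (hm : 3 ≤ m) :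
    Nonempty ((Subgroup.closure {rhoPerm, rhoPerm'} : Subgroup (Equiv.Perm (Option ℚ)))
        ≃* DihedralGroup 0) ∧
    Nonempty ((Subgroup.closure {cPerm r m} : Subgroup (Equiv.Perm (Option ℚ)))
        ≃* Multiplicative ℤ) ∧
    Function.Injective
      (Monoid.Coprod.lift
        (Subgroup.closure {rhoPerm, rhoPerm'} : Subgroup (Equiv.Perm (Option ℚ))).subtype
        (Subgroup.closure {cPerm r m} : Subgroup (Equiv.Perm (Option ℚ))).subtype) ∧
    (Monoid.Coprod.lift
        (Subgroup.closure {rhoPerm, rhoPerm'} : Subgroup (Equiv.Perm (Option ℚ))).subtype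
        (Subgroup.closure {cPerm r m} : Subgroup (Equiv.Perm (Option ℚ))).subtype).range
      = Gamma r m := by
  have hr : r.den ≠ 1 := fun h => by
    rw [← Rat.coe_int_num_of_den_eq_one h] at hr0 hr1
    norm_cast at hr0 hr1
    omega
  have hm2 : 2 ≤ |m| := le_abs.mpr (Or.inl (by omega))
  have : Infinite (Subgroup.closure {rhoPerm, rhoPerm'}) :=
    closureRhoPermMulEquiv.toEquiv.infinite_iff.mpr inferInstance
  refine ⟨⟨closureRhoPermMulEquiv⟩,
    Subgroup.nonempty_closure_singleton_mulEquiv_int (not_isOfFinOrder_cPerm hr hm2), ?_, ?_⟩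
  · exact Monoid.Coprod.lift_injective_of_ping_pong _ _
      (Or.inl ((Cardinal.natCast_lt_aleph0 (n := 3)).le.trans (Cardinal.aleph0_le_mk _)))
      ⟨none, none_notMem_nearSet r⟩ ⟨some r, by simp [r.den_pos]⟩ disjoint_compl_left
      (fun d hd => smul_nearSet_subset_compl hr d.2 (by simpa using hd))
      (fun c hc => smul_compl_nearSet_subset hr hm2 c.2 (by simpa using hc))
  · rw [Monoid.Coprod.range_lift, Subgroup.range_subtype, Subgroup.range_subtype,
      ← Subgroup.closure_union, Set.insert_union, Set.singleton_union, Gamma]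

end Heckoid
end

section
/- Let α > β ≥ 1 be coprime integers, n ≥ 2 an integer, m = 2n, d ≥ 2 an integer, and e ∈ {+1, −1}. Set α* = α^d m and β* = α^{d−1} m (α−β) + e. Then gcd(α*, β*) = 1, 0 < β*/α* < 1, and there exists an upper-meridian-pair-preserving epimorphism from the 2-bridge link group G(K(β*/α*)) = ⟨a, b | u_{β*/α*}⟩ onto the even Heckoid group H((α−β)/α; n) = ⟨a, b | u_{(α−β)/α}^n⟩ (this recovers the even-index case of Riley's construction of epimorphisms onto Heckoid groups). -/
/-!
For `s = q / p`, `u_s` is the product of `2p` consecutive terms of the `2p`-periodic sequence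
`x_i ^ (-1)^⌊iq/p⌋`, where `x_i` is `a` or `b` according to the parity of `i`: the last `p - 1`
terms spell `v⁻¹` because `⌊(2p - i)q/p⌋ = 2q - 1 - ⌊iq/p⌋` for `0 < i < p`.

For `s = (MQ + e)/(Mc)` and `r = Q/c` one has `⌊iq/(Mc)⌋ = ⌊(iQ + ⌊ie/M⌋)/c⌋`. As `e = ±1`,
`⌊ie/M⌋` is constant on `2c` consecutive blocks of `M` indices, so a cyclic conjugate of `u_s`
is a product of `2c` blocks, each made of `M` consecutive terms of a sequence
`x_i ^ (-1)^⌊(iQ + g)/c⌋`. When `2cn ∣ M`, each block is a product of conjugates of `u_r^{±n}`. Hence `u_s = 1` in `H(r;n)`, and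
`a ↦ a`, `b ↦ b` is the required epimorphism.
-/

namespace Heckoid

open Subgroup (normalClosure)

section Window

variable {G : Type*} [Group G]

def window (f : ℤ → G) (k : ℤ) : ℕ → G
  | 0 => 1
  | L + 1 => window f k L * f (k + L)

@[simp]
lemma window_zero (f : ℤ → G) (k : ℤ) : window f k 0 = 1 := rfl

lemma window_succ (f : ℤ → G) (k : ℤ) (L : ℕ) : window f k (L + 1) = window f k L * f (k + L) :=
  rfl

@[simp]
lemma window_one (f : ℤ → G) (k : ℤ) : window f k 1 = f k := by
  simp [window_succ]

lemma window_add (f : ℤ → G) (k : ℤ) (L₁ L₂ : ℕ) :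
    window f k (L₁ + L₂) = window f k L₁ * window f (k + L₁) L₂ := by
  induction L₂ with
  | zero => simp
  | succ L ih =>
    rw [← add_assoc, window_succ, ih, window_succ, mul_assoc, Nat.cast_add, add_assoc]

lemma window_succ' (f : ℤ → G) (k : ℤ) (L : ℕ) :
    window f k (L + 1) = f k * window f (k + 1) L := by
  rw [add_comm, window_add, window_one, Nat.cast_one]

lemma prod_map_range_eq_window (f : ℤ → G) (k : ℤ) (L : ℕ) :
    ((List.range L).map fun j : ℕ => f (k + j)).prod = window f k L := by
  induction L with
  | zero => simp
  | succ L ih => rw [List.prod_range_succ, ih, window_succ]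

lemma window_congr {f f' : ℤ → G} {k k' : ℤ} {L : ℕ}
    (h : ∀ j : ℕ, j < L → f (k + j) = f' (k' + j)) : window f k L = window f' k' L := by
  induction L with
  | zero => rfl
  | succ L ih => rw [window_succ, window_succ, ih fun j hj => h j (by omega), h L (by omega)]

lemma window_eq_inv_window {f f' : ℤ → G} {k t : ℤ} {L : ℕ}
    (h : ∀ j : ℕ, j < L → f (k + j) = (f' (t - (k + j)))⁻¹) :
    window f k L = (window f' (t - k - L + 1) L)⁻¹ := by
  induction L with
  | zero => simp
  | succ L ih =>
    rw [window_succ, ih fun j hj => h j (by omega), h L (by omega), window_succ', ← mul_inv_rev]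
    congr 3 <;> push_cast <;> ring

lemma window_add_period {f : ℤ → G} {T : ℤ} (hf : Function.Periodic f T) (k : ℤ) (L : ℕ) :
    window f (k + T) L = window f k L :=
  window_congr fun j _ => by rw [add_right_comm, hf]

lemma window_isConj {f : ℤ → G} {L : ℕ} (hf : Function.Periodic f L) (k : ℤ) :
    IsConj (window f 0 L) (window f k L) := by
  have step : ∀ k, IsConj (window f k L) (window f (k + 1) L) := fun k =>
    isConj_iff.mpr ⟨(f k)⁻¹, by
      have h := window_succ' f k L
      rw [window_succ, hf] at h
      rw [inv_inv, mul_assoc, h, inv_mul_cancel_left]⟩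
  induction k using Int.induction_on with
  | zero => exact IsConj.refl _
  | succ k ih => exact ih.trans (step k)
  | pred k ih => exact ih.trans (by simpa using (step (-(k : ℤ) - 1)).symm)

lemma window_mem_of_forall_block_mem {N : Subgroup G} {f : ℤ → G} {k : ℤ} {L R : ℕ}
    (h : ∀ t : ℕ, t < R → window f (k + L * t) L ∈ N) : window f k (L * R) ∈ N := by
  induction R with
  | zero => simp [N.one_mem]
  | succ R ih =>
    rw [Nat.mul_succ, window_add]
    exact mul_mem (ih fun t ht => h t (by omega)) (by exact_mod_cast h R (by omega))

lemma mem_of_isConj {N : Subgroup G} [N.Normal] {a b : G} (h : IsConj a b) (ha : a ∈ N) :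
    b ∈ N := by
  obtain ⟨c, rfl⟩ := isConj_iff.mp h
  exact ‹N.Normal›.conj_mem a ha c

lemma zpow_negOnePow_eq_inv {x : G} {m n : ℤ} (h : m.negOnePow = -n.negOnePow) :
    x ^ (m.negOnePow : ℤ) = (x ^ (n.negOnePow : ℤ))⁻¹ := by
  rw [h, Units.val_neg, zpow_neg]

end Window

lemma neg_add_one_ediv {c : ℤ} (hc : 0 < c) (y : ℤ) : -(y + 1) / c = -(y / c) - 1 := by
  have := Int.mul_ediv_add_emod y c
  refine ((Int.ediv_emod_unique (r := c - 1 - y % c) hc).mpr ⟨by linarith, ?_, ?_⟩).1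
  · linarith [Int.emod_lt_of_pos y hc]
  · linarith [Int.emod_nonneg y hc.ne']

lemma neg_one_pow_natAbs (x : ℤ) : (-1 : ℤ) ^ x.natAbs = x.negOnePow := by
  rw [← Int.coe_negOnePow_natCast, Int.natCast_natAbs, Int.negOnePow_abs]

def letter (i : ℤ) : FG := if Even i then ga else gb

lemma letter_add_of_even {t : ℤ} (ht : Even t) (i : ℤ) : letter (i + t) = letter i := by
  simp [letter, Int.even_add, ht]

lemma letter_sub_of_even {t : ℤ} (ht : Even t) (i : ℤ) : letter (t - i) = letter i := by
  simp [letter, Int.even_sub, ht]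

lemma genAt_eq_letter (j : ℕ) : genAt j = letter j := by
  rcases Nat.even_or_odd j with h | h
  · simp [genAt, letter, Int.even_coe_nat, h, Nat.even_iff.mp h]
  · simp [genAt, letter, Int.even_coe_nat, Nat.not_even_iff_odd.mpr h, Nat.odd_iff.mp h]

def pattern (q c g i : ℤ) : FG := letter i ^ (((i * q + g) / c).negOnePow : ℤ)

lemma pattern_periodic {q c : ℤ} (hc : c ≠ 0) (g : ℤ) :
    Function.Periodic (pattern q c g) (2 * c) := fun i => by
  have h : (i + 2 * c) * q + g = i * q + g + 2 * q * c := by ring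
  rw [pattern, pattern, letter_add_of_even (even_two_mul c), h, Int.add_mul_ediv_right _ _ hc,
    Int.negOnePow_add, Int.negOnePow_two_mul, mul_one]

lemma pattern_eq_pattern_add {q c g t : ℤ} (hc : 0 < c) (ht : Even t) (hd : 2 * c ∣ t * q - g)
    (i : ℤ) : pattern q c g i = pattern q c 0 (i + t) := by
  obtain ⟨w, hw⟩ := hd
  have h : (i + t) * q + 0 = i * q + g + 2 * w * c := by linear_combination hw
  rw [pattern, pattern, letter_add_of_even ht, h, Int.add_mul_ediv_right _ _ hc.ne',
    Int.negOnePow_add, Int.negOnePow_two_mul, mul_one]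

lemma pattern_eq_inv_pattern_sub {q c g t : ℤ} (hc : 0 < c) (ht : Even t)
    (hd : 2 * c ∣ t * q + g + 1) (i : ℤ) : pattern q c g i = (pattern q c 0 (t - i))⁻¹ := by
  obtain ⟨w, hw⟩ := hd
  have h : (t - i) * q + 0 = -(i * q + g + 1) + 2 * w * c := by linear_combination hw
  rw [pattern, pattern, letter_sub_of_even ht, h, Int.add_mul_ediv_right _ _ hc.ne',
    neg_add_one_ediv hc]
  refine zpow_negOnePow_eq_inv ?_
  simp [Int.negOnePow_add, Int.negOnePow_sub, Int.negOnePow_two_mul]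

lemma pattern_two_mul_sub {q c i : ℤ} (hc : 0 < c) (h : ¬ c ∣ i * q) :
    pattern q c 0 (2 * c - i) = (pattern q c 0 i)⁻¹ := by
  have e : (2 * c - i) * q + 0 = -(i * q) + 2 * q * c := by ring
  rw [pattern, pattern, letter_sub_of_even (even_two_mul c), e, Int.add_mul_ediv_right _ _ hc.ne',
    Int.neg_ediv, if_neg h, Int.sign_eq_one_of_pos hc, add_zero]
  refine zpow_negOnePow_eq_inv ?_
  simp [Int.negOnePow_add, Int.negOnePow_sub, Int.negOnePow_two_mul]

lemma exists_even_mul_sub_dvd {q c : ℤ} (hco : IsCoprime q c) (g : ℤ) :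
    ∃ t, Even t ∧ 2 * c ∣ t * q - 2 * g := by
  obtain ⟨u, v, huv⟩ := hco
  exact ⟨2 * g * u, ⟨g * u, by ring⟩, -(g * v), by linear_combination 2 * g * huv⟩

lemma isCoprime_num_den (r : ℚ) : IsCoprime r.num r.den :=
  Int.isCoprime_iff_gcd_eq_one.mpr r.reduced

lemma odd_num_of_even_den {r : ℚ} (h : Even r.den) : Odd r.num := by
  refine Int.not_even_iff_odd.mp fun hnum => ?_
  have h2 := (isCoprime_num_den r).isUnit_of_dvd' hnum.two_dvd
    (Int.natCast_dvd_natCast.mpr h.two_dvd)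
  norm_num [Int.isUnit_iff] at h2

lemma vWord_eq_window (q : ℤ) {p : ℕ} (hp : 0 < p) :
    vWord q p = window (pattern q p 0) 1 (p - 1) := by
  rw [vWord, ← prod_map_range_eq_window]
  congr 1
  refine List.map_congr_left fun j _ => ?_
  rw [genAt_eq_letter, epsSign, Int.fdiv_eq_ediv_of_nonneg _ (by positivity), neg_one_pow_natAbs,
    pattern, add_zero, add_comm (1 : ℤ)]
  push_cast
  rfl

lemma pattern_den (t : ℚ) : pattern t.num t.den 0 t.den =
    if t.den % 2 = 1 then gb ^ ((-1 : ℤ) ^ t.num.natAbs) else ga⁻¹ := by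
  have hp : (t.den : ℤ) ≠ 0 := by positivity
  rw [pattern, add_zero, mul_comm, Int.mul_ediv_cancel _ hp, neg_one_pow_natAbs]
  rcases Nat.even_or_odd t.den with h | h
  · simp [letter, Int.even_coe_nat, h, Nat.even_iff.mp h,
      Int.negOnePow_odd _ (odd_num_of_even_den h)]
  · simp [letter, Int.even_coe_nat, Nat.not_even_iff_odd.mpr h, Nat.odd_iff.mp h]

lemma window_eq_inv_vWord (t : ℚ) :
    window (pattern t.num t.den 0) (t.den + 1) (t.den - 1) = (vWord t.num t.den)⁻¹ := by
  have hp := t.den_pos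
  rw [vWord_eq_window _ hp, window_eq_inv_window (t := 2 * t.den) fun j hj => ?_]
  · congr 2
    push_cast [Nat.cast_sub hp]
    ring
  · have hi : (0 : ℤ) < t.den - 1 - j ∧ (t.den - 1 - j : ℤ) < t.den := by omega
    have hnd : ¬ (t.den : ℤ) ∣ (t.den - 1 - j) * t.num := fun hd =>
      (Int.eq_zero_of_dvd_of_natAbs_lt_natAbs
        ((isCoprime_num_den t).symm.dvd_of_dvd_mul_right hd) (by omega)).not_gt hi.1
    have h := pattern_two_mul_sub (by positivity) hnd
    rw [show 2 * (t.den : ℤ) - (t.den - 1 - j) = t.den + 1 + j by ring] at h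
    rw [h, show 2 * (t.den : ℤ) - (t.den + 1 + j) = t.den - 1 - j by ring]

lemma uWord_eq_window (t : ℚ) : uWord t = window (pattern t.num t.den 0) 0 (2 * t.den) := by
  have hp := t.den_pos
  have hsplit : 2 * t.den = 1 + (t.den - 1) + 1 + (t.den - 1) := by omega
  rw [hsplit, window_add, window_add, window_add, window_one, window_one]
  have e1 : (0 : ℤ) + (1 + (t.den - 1) : ℕ) = t.den := by omega
  have e2 : (0 : ℤ) + (1 + (t.den - 1) + 1 : ℕ) = t.den + 1 := by omega
  rw [e1, e2, zero_add, Nat.cast_one, ← vWord_eq_window _ hp, window_eq_inv_vWord, pattern_den,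
    pattern, zero_mul, zero_add, Int.zero_ediv, Int.negOnePow_zero, Units.val_one, zpow_one]
  unfold uWord
  split_ifs <;> simp [letter]

lemma uWord_pow_eq_window (t : ℚ) (n : ℕ) :
    uWord t ^ n = window (pattern t.num t.den 0) 0 (2 * t.den * n) := by
  have hper := (pattern_periodic (q := t.num) (by positivity : (t.den : ℤ) ≠ 0) 0).nat_mul
  induction n with
  | zero => simp
  | succ n ih =>
    rw [pow_succ, ih, Nat.mul_succ, window_add, uWord_eq_window]
    congr 1
    rw [show (0 : ℤ) + (2 * t.den * n : ℕ) = 0 + n * (2 * t.den) by push_cast; ring,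
      window_add_period (hper n)]

/-- An even shift of `g` translates the indices, an odd one reverses and inverts the sequence. -/
lemma window_pattern_mem_normalClosure (r : ℚ) (n : ℕ) (g k : ℤ) :
    window (pattern r.num r.den g) k (2 * r.den * n) ∈ normalClosure {uWord r ^ n} := by
  have hc : (0 : ℤ) < r.den := by positivity
  have hper := (pattern_periodic (q := r.num) hc.ne' 0).nat_mul n
  rw [show (n : ℤ) * (2 * r.den) = (2 * r.den * n : ℕ) by push_cast; ring] at hper
  have hbase : ∀ k',
      window (pattern r.num r.den 0) k' (2 * r.den * n) ∈ normalClosure {uWord r ^ n} :=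
    fun k' => mem_of_isConj (window_isConj hper k')
      (uWord_pow_eq_window r n ▸ Subgroup.subset_normalClosure rfl)
  rcases Int.even_or_odd' g with ⟨G, rfl | rfl⟩
  · obtain ⟨t, ht, hd⟩ := exists_even_mul_sub_dvd (isCoprime_num_den r) G
    rw [window_congr fun j _ => (pattern_eq_pattern_add hc ht hd (k + j)).trans
      (by rw [add_right_comm])]
    exact hbase (k + t)
  · obtain ⟨t, ht, hd⟩ := exists_even_mul_sub_dvd (isCoprime_num_den r) (-(G + 1))
    have hd' : 2 * (r.den : ℤ) ∣ t * r.num + (2 * G + 1) + 1 := by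
      convert hd using 1
      ring
    rw [window_eq_inv_window fun j _ => pattern_eq_inv_pattern_sub hc ht hd' (k + j)]
    exact inv_mem (hbase _)

lemma pattern_mul_add_mul {M c : ℤ} (hM : 0 < M) (Q e i : ℤ) :
    pattern (M * Q + e) (M * c) 0 i = pattern Q c (i * e / M) i := by
  have h : i * (M * Q + e) + 0 = i * e + i * Q * M := by ring
  rw [pattern, pattern, h, ← Int.ediv_ediv_of_nonneg hM.le, Int.add_mul_ediv_right _ _ hM.ne',
    add_comm]

lemma exists_block_start {M e : ℤ} (hM : 0 < M) (he : e = 1 ∨ e = -1) :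
    ∃ k₀ : ℤ, ∀ (t : ℤ) (x : ℕ), (x : ℤ) < M → (k₀ + M * t + x) * e / M = e * t - k₀ := by
  rcases he with rfl | rfl
  · refine ⟨0, fun t x hx => ?_⟩
    rw [show (0 + M * t + x) * 1 = x + t * M by ring, Int.add_mul_ediv_right _ _ hM.ne',
      Int.ediv_eq_zero_of_lt (by positivity) hx]
    ring
  · refine ⟨1, fun t x hx => ?_⟩
    rw [show (1 + M * t + x) * -1 = (M - 1 - x) + (-t - 1) * M by ring,
      Int.add_mul_ediv_right _ _ hM.ne', Int.ediv_eq_zero_of_lt (by omega) (by omega)]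
    ring

theorem uWord_mem_normalClosure {r s : ℚ} {n : ℕ} {M e : ℤ} (he : e = 1 ∨ e = -1)
    (hdvd : 2 * (r.den : ℤ) * n ∣ M) (hnum : s.num = M * r.num + e)
    (hden : (s.den : ℤ) = M * r.den) : uWord s ∈ normalClosure {uWord r ^ n} := by
  have hM : 0 < M := pos_of_mul_pos_left (hden ▸ Int.natCast_pos.mpr s.den_pos) (by positivity)
  obtain ⟨k₀, hk₀⟩ := exists_block_start hM he
  have hf : pattern s.num s.den 0 = pattern (M * r.num + e) (M * r.den) 0 := by rw [hnum, hden]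
  have hper : Function.Periodic (pattern s.num s.den 0) (2 * s.den : ℕ) := by
    push_cast
    exact pattern_periodic (by positivity) 0
  lift M to ℕ using hM.le
  obtain ⟨m, hm⟩ : 2 * r.den * n ∣ M := by exact_mod_cast hdvd
  have hlen : 2 * s.den = M * (2 * r.den) := by
    have : (s.den : ℤ) = (M * r.den : ℕ) := by push_cast; exact hden
    rw [Nat.cast_inj.mp this]
    ring
  rw [uWord_eq_window s]
  refine mem_of_isConj (window_isConj hper k₀).symm ?_
  rw [hlen]
  refine window_mem_of_forall_block_mem fun t _ => ?_
  rw [hf, window_congr (f' := pattern r.num r.den (e * t - k₀)) (k' := k₀ + M * t) fun j hj => ?_]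
  · rw [hm]
    exact window_mem_of_forall_block_mem fun u _ => window_pattern_mem_normalClosure r n _ _
  · rw [pattern_mul_add_mul hM, hk₀ t j (by exact_mod_cast hj)]

lemma exists_isUMPP_of_mem_normalClosure {s r : ℚ} {n : ℕ}
    (h : uWord s ∈ normalClosure {uWord r ^ n}) :
    ∃ φ : TwoBridgeGroup s →* HeckoidGroup r n, IsUMPP s r n φ := by
  have hle : normalClosure {uWord s} ≤ (normalClosure {uWord r ^ n}).comap (MonoidHom.id FG) :=
    Subgroup.normalClosure_le_normal (Set.singleton_subset_iff.mpr h)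
  exact ⟨QuotientGroup.map _ _ _ hle,
    QuotientGroup.map_surjective_of_surjective _ _ _ QuotientGroup.mk_surjective hle,
    Or.inl ⟨IsConj.refl _, IsConj.refl _⟩⟩

lemma isCoprime_mul_mul_add {M c Q e : ℤ} (hcM : c ∣ M) (he : e = 1 ∨ e = -1) :
    IsCoprime (M * c) (M * Q + e) := by
  have hee : e * e = 1 := by rcases he with rfl | rfl <;> norm_num
  obtain ⟨k, rfl⟩ := hcM
  exact IsCoprime.mul_left ⟨-(e * Q), e, by linear_combination hee⟩
    ⟨-(e * k * Q), e, by linear_combination hee⟩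

lemma num_den_div_of_isCoprime {a b : ℤ} (hb : 0 < b) (h : IsCoprime a b) :
    ((a : ℚ) / b).num = a ∧ (((a : ℚ) / b).den : ℤ) = b :=
  ⟨Rat.num_div_eq_of_coprime hb (Int.isCoprime_iff_gcd_eq_one.mp h),
    Rat.den_div_eq_of_coprime hb (Int.isCoprime_iff_gcd_eq_one.mp h)⟩

/-- Riley's construction (even-index case): for coprime `α > β ≥ 1`,
`n ≥ 2`, `m = 2n`, `d ≥ 2` and `e = ±1`, setting `α* = α^d m` and
`β* = α^{d−1} m (α−β) + e`, one has `gcd(α*,β*) = 1`, `0 < β*/α* < 1`, and there is an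
upper-meridian-pair-preserving epimorphism `G(K(β*/α*)) → H((α−β)/α; n)`. -/
theorem riley_epimorphism (α β : ℤ) (hβ : 1 ≤ β) (hαβ : β < α) (hcop : IsCoprime α β)
    (n : ℕ) (hn : 2 ≤ n) (d : ℕ) (hd : 2 ≤ d) (e : ℤ) (he : e = 1 ∨ e = -1) :
    Int.gcd (α ^ d * (2 * n)) (α ^ (d - 1) * (2 * n) * (α - β) + e) = 1 ∧
    0 < ((α ^ (d - 1) * (2 * n) * (α - β) + e : ℤ) : ℚ) / ((α ^ d * (2 * n) : ℤ) : ℚ) ∧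
    ((α ^ (d - 1) * (2 * n) * (α - β) + e : ℤ) : ℚ) / ((α ^ d * (2 * n) : ℤ) : ℚ) < 1 ∧
    ∃ φ : TwoBridgeGroup
          (((α ^ (d - 1) * (2 * n) * (α - β) + e : ℤ) : ℚ) / ((α ^ d * (2 * n) : ℤ) : ℚ)) →*
        HeckoidGroup (((α : ℚ) - β) / α) n,
      IsUMPP (((α ^ (d - 1) * (2 * n) * (α - β) + e : ℤ) : ℚ) / ((α ^ d * (2 * n) : ℤ) : ℚ))
        (((α : ℚ) - β) / α) n φ := by
  have hα : 0 < α := by omega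
  set M : ℤ := α ^ (d - 1) * (2 * n) with hM_def
  have hP : α ^ d * (2 * n) = M * α := by rw [hM_def, mul_right_comm, pow_sub_one_mul (by omega)]
  have hM : 2 ≤ M := by
    have : 1 ≤ α ^ (d - 1) := one_le_pow₀ (by omega)
    nlinarith
  have hdvd : 2 * α * n ∣ M :=
    Dvd.intro (α ^ (d - 2)) (by rw [hM_def, show d - 1 = d - 2 + 1 by omega, pow_succ]; ring)
  have hαM : α ∣ M := ((dvd_mul_left α 2).mul_right n).trans hdvd
  have hcop' := isCoprime_mul_mul_add (Q := α - β) hαM he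
  have hcopQ : IsCoprime (α - β) α := by
    simpa [sub_eq_add_neg, add_comm] using hcop.symm.neg_left.add_mul_left_left 1
  obtain ⟨hrnum, hrden⟩ := num_den_div_of_isCoprime hα hcopQ
  obtain ⟨hsnum, hsden⟩ := num_den_div_of_isCoprime (by positivity) hcop'.symm
  push_cast at hrnum hrden
  rw [hP]
  have hq : 0 < M * (α - β) + e := by rcases he with rfl | rfl <;> nlinarith
  have hqP : M * (α - β) + e < M * α := by rcases he with rfl | rfl <;> nlinarith
  refine ⟨Int.isCoprime_iff_gcd_eq_one.mp hcop', by positivity,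
    (div_lt_one (by positivity)).mpr (by exact_mod_cast hqP),
    exists_isUMPP_of_mem_normalClosure (uWord_mem_normalClosure (M := M) he ?_ ?_ ?_)⟩
  · rwa [hrden]
  · rw [hsnum, hrnum]
  · rw [hsden, hrden]

end Heckoid
end
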